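/- Corollary (one example per equivalence class suffices for sample-optimal encoders): Let Q be a probing family containing all linear predictors and closed under vector manipulation, and let φ* : X → ℝ^d be a sample-optimal encoder for the ∼-invariant tasks T∼ and Q. Then for every task t ∈ T∼ and every dataset D of inputs labeled with their most likely labels whose inputs contain at least one element of every equivalence class of ∼, the excess risk vanishes: W(φ*, Q, t, D) = 0; equivalently, every ERM trained on D attains the Bayes risk, sup_{f̂ ∈ ERM(D)} R_t(f̂, φ*) = N_t. -/

import Mathlib

open scoped Classical
open Finset

namespace ISSL

/-- Number of equivalence classes of the equivalence relation `r` on `X`. -/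
noncomputable def nequiv {X : Type*} (r : Setoid X) : ℕ := Nat.card (Quotient r)

noncomputable instance instFintypeQuot {X : Type*} [Fintype X] (r : Setoid X) :
    Fintype (Quotient r) := Fintype.ofFinite _

/-- `M` is a maximal invariant for `r`: `M x = M x'` iff `x ∼ x'`. -/
def IsMaximalInvariant {X : Type*} (r : Setoid X) {k : ℕ} (M : X → Fin k) : Prop :=
  ∀ x x', M x = M x' ↔ r x x'

/-- A map is `∼`-invariant if it is constant on equivalence classes. -/
def IsInvariant {X : Type*} (r : Setoid X) {Z : Type*} (φ : X → Z) : Prop :=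
  ∀ x x', r x x' → φ x = φ x'

/-- Argmax prediction `pred(v) = argmax_i v[i]` for a vector-output predictor. -/
noncomputable def predArg {k : ℕ} [NeZero k] (v : Fin k → ℝ) : Fin k :=
  Classical.choose ((Finset.univ : Finset (Fin k)).exists_max_image v
    ⟨⟨0, Nat.pos_of_ne_zero (NeZero.ne k)⟩, Finset.mem_univ _⟩)

/-- Binary prediction `1[v ≥ 0]` from a scalar logit. -/
noncomputable def predBin (v : Fin 1 → ℝ) : Fin 2 := if 0 ≤ v 0 then 1 else 0

/-- A probing family on `ℝ^d`: for each output arity `k`, a set of maps `ℝ^d → ℝ^k`. -/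
structure ProbingFamily (d : ℕ) where
  mem : (k : ℕ) → Set ((Fin d → ℝ) → (Fin k → ℝ))

/-- The linear probing family: all maps `z ↦ Wᵀ z`. -/
def linearFamily (d : ℕ) : ProbingFamily d :=
  ⟨fun k => {f | ∃ W : Matrix (Fin d) (Fin k) ℝ, ∀ z j, f z j = ∑ i, W i j * z i}⟩

/-- `Q` contains all linear predictors. -/
def ContainsLinear {d : ℕ} (Q : ProbingFamily d) : Prop :=
  ∀ k, (linearFamily d).mem k ⊆ Q.mem k

/-- `Q` is closed under vector manipulation: concatenation of two members, coordinate
indexing of a member, and sums of two scalar-output members. -/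
def ClosedUnderVectorManipulation {d : ℕ} (Q : ProbingFamily d) : Prop :=
  (∀ (k k' : ℕ) (f : (Fin d → ℝ) → Fin k → ℝ) (g : (Fin d → ℝ) → Fin k' → ℝ),
      f ∈ Q.mem k → g ∈ Q.mem k' → (fun z => Fin.append (f z) (g z)) ∈ Q.mem (k + k')) ∧
  (∀ (k : ℕ) (f : (Fin d → ℝ) → Fin k → ℝ), f ∈ Q.mem k →
      ∀ i : Fin k, (fun z (_ : Fin 1) => f z i) ∈ Q.mem 1) ∧
  (∀ f g : (Fin d → ℝ) → Fin 1 → ℝ, f ∈ Q.mem 1 → g ∈ Q.mem 1 →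
      (fun z j => f z j + g z j) ∈ Q.mem 1)

/-- The classification rules induced by the probing family at arity `k`: for `k = 2`
a scalar-output predictor with sign prediction, for `k ≥ 3` a `k`-output predictor with
argmax prediction. -/
noncomputable def rules {d : ℕ} (Q : ProbingFamily d) : (k : ℕ) → Set ((Fin d → ℝ) → Fin k)
  | 0 => ∅
  | 1 => ∅
  | 2 => {h | ∃ f ∈ Q.mem 1, ∀ z, h z = predBin (f z)}
  | (n + 3) => {h | ∃ f ∈ Q.mem (n + 3), ∀ z, h z = predArg (f z)}

/-- A `k`-ary `∼`-invariant task: a joint distribution on `X × Fin k` such that for every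
input the most likely label is unique and invariant under `∼`. -/
structure InvTask (X : Type*) [Fintype X] (r : Setoid X) (k : ℕ) where
  p : X → Fin k → ℝ
  nonneg : ∀ x y, 0 ≤ p x y
  sum_one : ∑ x : X, ∑ y : Fin k, p x y = 1
  label : X → Fin k
  label_argmax : ∀ x y, y ≠ label x → p x y < p x (label x)
  label_inv : ∀ x x', r x x' → label x = label x'

variable {X : Type*} [Fintype X] {r : Setoid X} {d k : ℕ}

/-- Population 0-1 risk of a classification rule `h` through encoder `φ` on task `t`. -/
noncomputable def risk (t : InvTask X r k) (φ : X → Fin d → ℝ)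
    (h : (Fin d → ℝ) → Fin k) : ℝ :=
  ∑ x : X, ∑ y : Fin k, t.p x y * (if y = h (φ x) then 0 else 1)

/-- Bayes error of task `t`. -/
noncomputable def bayes (t : InvTask X r k) : ℝ := 1 - ∑ x : X, t.p x (t.label x)

/-- `φ` is population optimal: the best probe realizes the Bayes error on every invariant task. -/
noncomputable def PopOptimal (r : Setoid X) (Q : ProbingFamily d)
    (φ : X → Fin d → ℝ) : Prop :=
  ∀ k : ℕ, 2 ≤ k → k ≤ nequiv r → ∀ t : InvTask X r k,
    sInf ((fun h => risk t φ h) '' rules Q k) = bayes t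

/-- Input marginal of task `t`. -/
noncomputable def marginal (t : InvTask X r k) (x : X) : ℝ := ∑ y : Fin k, t.p x y

/-- Empirical 0-1 risk of rule `h` on a dataset of inputs labeled by the most likely label. -/
noncomputable def empRisk (t : InvTask X r k) (φ : X → Fin d → ℝ)
    (h : (Fin d → ℝ) → Fin k) {n : ℕ} (D : Fin n → X) : ℝ :=
  (∑ i : Fin n, if t.label (D i) = h (φ (D i)) then (0 : ℝ) else 1) / n

/-- `h` is an empirical risk minimizer on dataset `D`. -/
noncomputable def IsERM (Q : ProbingFamily d) (t : InvTask X r k) (φ : X → Fin d → ℝ)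
    {n : ℕ} (D : Fin n → X) (h : (Fin d → ℝ) → Fin k) : Prop :=
  h ∈ rules Q k ∧ ∀ h' ∈ rules Q k, empRisk t φ h D ≤ empRisk t φ h' D

/-- Excess risk of ERMs: worst population risk of an ERM minus the Bayes error. -/
noncomputable def excessRisk (Q : ProbingFamily d) (t : InvTask X r k)
    (φ : X → Fin d → ℝ) {n : ℕ} (D : Fin n → X) : ℝ :=
  sSup ((fun h => risk t φ h) '' {h | IsERM Q t φ D h}) - bayes t

/-- Expected excess risk over datasets of `n` i.i.d. inputs labeled by the most likely label. -/
noncomputable def expExcess (Q : ProbingFamily d) (t : InvTask X r k)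
    (φ : X → Fin d → ℝ) (n : ℕ) : ℝ :=
  ∑ D : Fin n → X, (∏ i, marginal t (D i)) * excessRisk Q t φ D

/-- Worst-case (over invariant tasks) expected excess risk of ERMs. -/
noncomputable def worstExcess (r : Setoid X) (Q : ProbingFamily d)
    (φ : X → Fin d → ℝ) (n : ℕ) : ℝ :=
  sSup {e : ℝ | ∃ k : ℕ, 2 ≤ k ∧ k ≤ nequiv r ∧ ∃ t : InvTask X r k, e = expExcess Q t φ n}

/-- `φ` is sample optimal: population optimal and minimizing the worst-case expected
excess risk of ERMs among population-optimal encoders, for every sample size. -/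
noncomputable def SampleOptimal (r : Setoid X) (Q : ProbingFamily d)
    (φ : X → Fin d → ℝ) : Prop :=
  PopOptimal r Q φ ∧
    ∀ n : ℕ, 1 ≤ n → ∀ φ' : X → Fin d → ℝ, PopOptimal r Q φ' →
      worstExcess r Q φ n ≤ worstExcess r Q φ' n

/-- Probability of an equivalence class under the input marginal of `t`. -/
noncomputable def classProb (t : InvTask X r k) (c : Quotient r) : ℝ :=
  ∑ x : X, if Quotient.mk r x = c then marginal t x else 0

/-- Conditional probability of label `y` given the equivalence class `c` under `t`. -/
noncomputable def classCond (t : InvTask X r k) (c : Quotient r) (y : Fin k) : ℝ :=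
  (∑ x : X, if Quotient.mk r x = c then t.p x y else 0) / classProb t c

/-- `φ` is `(X,∼)`-shattered by `Q`: every invariant binary labeling is realized. -/
noncomputable def InvShattered (r : Setoid X) (Q : ProbingFamily d)
    (φ : X → Fin d → ℝ) : Prop :=
  ∀ c : X → Fin 2, IsInvariant r c → ∃ f ∈ Q.mem 1, ∀ x, c x = predBin (f (φ x))

/-- A set `Z ⊆ ℝ^d` is classically shattered by `Q`. -/
noncomputable def ClassicallyShattered {d : ℕ} (Q : ProbingFamily d)
    (Z : Set (Fin d → ℝ)) : Prop :=
  ∀ c : (Fin d → ℝ) → Fin 2, ∃ f ∈ Q.mem 1, ∀ z ∈ Z, c z = predBin (f z)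


section Aux

variable {X : Type*} [Fintype X] {r : Setoid X} {d k : ℕ} {Q : ProbingFamily d}

lemma aux_sum_ite (hk : 2 ≤ k) (y0 : Fin k) (a b : ℝ) :
    ∑ y : Fin k, (if y = y0 then a else b) = a + ((k : ℝ) - 1) * b := by
  have h : ∀ y : Fin k, (if y = y0 then a else b) = b + (if y = y0 then a - b else 0) := by
    intro y; split <;> ring
  simp_rw [h, Finset.sum_add_distrib, Finset.sum_ite_eq' Finset.univ y0,
    Finset.sum_const, Finset.card_univ, Fintype.card_fin, nsmul_eq_mul,
    if_pos (Finset.mem_univ y0)]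
  ring

lemma risk_eq (t : InvTask X r k) (ψ : X → Fin d → ℝ) (h : (Fin d → ℝ) → Fin k) :
    risk t ψ h = bayes t + ∑ x : X, (t.p x (t.label x) - t.p x (h (ψ x))) := by
  unfold risk bayes
  have h1 : ∀ x : X, ∑ y : Fin k, t.p x y * (if y = h (ψ x) then (0:ℝ) else 1)
      = (∑ y : Fin k, t.p x y) - t.p x (h (ψ x)) := by
    intro x
    have h2 : ∀ y : Fin k, t.p x y * (if y = h (ψ x) then (0:ℝ) else 1)
        = t.p x y - (if y = h (ψ x) then t.p x y else 0) := by
      intro y; split <;> ring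
    simp_rw [h2, Finset.sum_sub_distrib, Finset.sum_ite_eq' Finset.univ,
      if_pos (Finset.mem_univ _)]
  simp_rw [h1]
  rw [show (1:ℝ) = ∑ x : X, ∑ y : Fin k, t.p x y from t.sum_one.symm]
  rw [Finset.sum_sub_distrib, Finset.sum_sub_distrib]
  ring

lemma gap_nonneg (t : InvTask X r k) (x : X) (y : Fin k) :
    0 ≤ t.p x (t.label x) - t.p x y := by
  rcases eq_or_ne y (t.label x) with h | h
  · simp [h]
  · linarith [t.label_argmax x y h]

lemma bayes_le_risk (t : InvTask X r k) (ψ : X → Fin d → ℝ) (h : (Fin d → ℝ) → Fin k) :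
    bayes t ≤ risk t ψ h := by
  rw [risk_eq]
  have : 0 ≤ ∑ x : X, (t.p x (t.label x) - t.p x (h (ψ x))) :=
    Finset.sum_nonneg fun x _ => gap_nonneg t x _
  linarith

lemma risk_le_one (t : InvTask X r k) (ψ : X → Fin d → ℝ) (h : (Fin d → ℝ) → Fin k) :
    risk t ψ h ≤ 1 := by
  unfold risk
  calc ∑ x : X, ∑ y : Fin k, t.p x y * (if y = h (ψ x) then (0:ℝ) else 1)
      ≤ ∑ x : X, ∑ y : Fin k, t.p x y := by
        refine Finset.sum_le_sum fun x _ => Finset.sum_le_sum fun y _ => ?_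
        have := t.nonneg x y
        split <;> nlinarith
    _ = 1 := t.sum_one

lemma sum_marginal (t : InvTask X r k) : ∑ x : X, marginal t x = 1 := t.sum_one

lemma marginal_nonneg (t : InvTask X r k) (x : X) : 0 ≤ marginal t x :=
  Finset.sum_nonneg fun y _ => t.nonneg x y

lemma label_le_marginal (t : InvTask X r k) (x : X) : t.p x (t.label x) ≤ marginal t x :=
  Finset.single_le_sum (fun y _ => t.nonneg x y) (Finset.mem_univ _)

lemma bayes_nonneg (t : InvTask X r k) : 0 ≤ bayes t := by
  unfold bayes
  have h1 : ∑ x : X, t.p x (t.label x) ≤ ∑ x : X, marginal t x :=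
    Finset.sum_le_sum fun x _ => label_le_marginal t x
  rw [sum_marginal] at h1
  linarith

end Aux
section Aux2

variable {X : Type*} [Fintype X] {r : Setoid X} {d k : ℕ} {Q : ProbingFamily d}

lemma zero_mem_linear {j : ℕ} : (fun (_ : Fin d → ℝ) (_ : Fin j) => (0:ℝ)) ∈ (linearFamily d).mem j := by
  refine ⟨0, fun z i => ?_⟩
  simp [Matrix.zero_apply]

lemma rules_nonempty (hQlin : ContainsLinear Q) (hk : 2 ≤ k) : (rules Q k).Nonempty := by
  match k, hk with
  | 2, _ =>
    exact ⟨fun z => predBin ((fun _ _ => (0:ℝ)) z),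
      ⟨fun _ _ => (0:ℝ), hQlin 1 zero_mem_linear, fun z => rfl⟩⟩
  | (n+3), _ =>
    exact ⟨fun z => predArg ((fun (_ : Fin d → ℝ) (_ : Fin (n+3)) => (0:ℝ)) z),
      ⟨fun _ _ => (0:ℝ), hQlin (n+3) zero_mem_linear, fun z => rfl⟩⟩

lemma risk_image_finite (t : InvTask X r k) (ψ : X → Fin d → ℝ)
    (s : Set ((Fin d → ℝ) → Fin k)) : ((fun h => risk t ψ h) '' s).Finite := by
  apply Set.Finite.subset (Set.finite_range
    (fun g : X → Fin k => ∑ x : X, ∑ y : Fin k, t.p x y * (if y = g x then (0:ℝ) else 1)))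
  rintro _ ⟨h, _, rfl⟩
  exact ⟨fun x => h (ψ x), rfl⟩

/-- Realizability of every invariant labeling through a population-optimal encoder. -/
lemma realize (ψ : X → Fin d → ℝ) (hψ : PopOptimal r Q ψ) (hQlin : ContainsLinear Q)
    (hn : 2 ≤ nequiv r) (hk2 : 2 ≤ k) (hkm : k ≤ nequiv r)
    (c : X → Fin k) (hc : IsInvariant r c) :
    ∃ h ∈ rules Q k, ∀ x, h (ψ x) = c x := by
  have hXne : Nonempty X := by
    have h1 : 0 < nequiv r := by omega
    simp only [nequiv] at h1
    have h2 : Nonempty (Quotient r) := (Nat.card_pos_iff.mp h1).1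
    exact ⟨h2.some.out⟩
  have hcard : (0:ℝ) < (Fintype.card X : ℝ) := by exact_mod_cast Fintype.card_pos
  set T : InvTask X r k :=
    { p := fun x y => if y = c x then ((Fintype.card X : ℝ))⁻¹ else 0
      nonneg := fun x y => by split <;> positivity
      sum_one := by
        have h1 : ∀ x : X, ∑ y : Fin k, (if y = c x then ((Fintype.card X : ℝ))⁻¹ else 0)
            = (Fintype.card X : ℝ)⁻¹ := by
          intro x; rw [aux_sum_ite hk2]; ring
        simp_rw [h1, Finset.sum_const, Finset.card_univ, nsmul_eq_mul]
        field_simp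
      label := c
      label_argmax := fun x y hy => by
        simp only [if_neg hy, if_pos rfl]
        exact inv_pos.mpr hcard
      label_inv := fun x x' hxx' => hc x x' hxx' } with hT
  have hTp : ∀ x y, T.p x y = if y = c x then ((Fintype.card X : ℝ))⁻¹ else 0 :=
    fun _ _ => rfl
  have hTlab : T.label = c := rfl
  have hplab : ∀ x : X, T.p x (T.label x) = (Fintype.card X : ℝ)⁻¹ := by
    intro x; rw [hTp, hTlab, if_pos rfl]
  have hbT : bayes T = 0 := by
    unfold bayes
    rw [show ∑ x : X, T.p x (T.label x) = ∑ _x : X, (Fintype.card X : ℝ)⁻¹ from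
      Finset.sum_congr rfl fun x _ => hplab x]
    rw [Finset.sum_const, Finset.card_univ, nsmul_eq_mul]
    field_simp
    norm_num
  have hinf := hψ k hk2 hkm T
  rw [hbT] at hinf
  have hne : ((fun h => risk T ψ h) '' rules Q k).Nonempty :=
    (rules_nonempty hQlin hk2).image _
  have hmem := Set.Nonempty.csInf_mem hne (risk_image_finite T ψ _)
  rw [hinf] at hmem
  obtain ⟨h0, hh0, hr0⟩ := hmem
  have hr0' : risk T ψ h0 = 0 := hr0
  refine ⟨h0, hh0, fun x => ?_⟩
  have hsum : ∑ x : X, (T.p x (T.label x) - T.p x (h0 (ψ x))) = 0 := by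
    have h3 := risk_eq T ψ h0
    rw [hr0', hbT] at h3
    linarith
  have hzero := (Finset.sum_eq_zero_iff_of_nonneg
    (fun x _ => gap_nonneg T x _)).mp hsum x (Finset.mem_univ x)
  by_contra hne'
  rw [hplab, hTp, if_neg hne'] at hzero
  have hinvne : (Fintype.card X : ℝ)⁻¹ ≠ 0 := by positivity
  apply hinvne
  linarith

end Aux2
section Aux3

variable {X : Type*} [Fintype X] {r : Setoid X} {d k : ℕ} {Q : ProbingFamily d}

lemma empRisk_nonneg (t : InvTask X r k) (ψ : X → Fin d → ℝ) (h : (Fin d → ℝ) → Fin k)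
    {n : ℕ} (D : Fin n → X) : 0 ≤ empRisk t ψ h D := by
  unfold empRisk
  apply div_nonneg _ (Nat.cast_nonneg n)
  exact Finset.sum_nonneg fun i _ => by split <;> norm_num

lemma empRisk_zero (t : InvTask X r k) (ψ : X → Fin d → ℝ) (h : (Fin d → ℝ) → Fin k)
    {n : ℕ} (D : Fin n → X) (hcor : ∀ i, h (ψ (D i)) = t.label (D i)) :
    empRisk t ψ h D = 0 := by
  unfold empRisk
  have h1 : ∀ i : Fin n, (if t.label (D i) = h (ψ (D i)) then (0:ℝ) else 1) = 0 :=
    fun i => if_pos (hcor i).symm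
  simp_rw [h1, Finset.sum_const_zero, zero_div]

lemma isERM_of_correct (t : InvTask X r k) (ψ : X → Fin d → ℝ) (h : (Fin d → ℝ) → Fin k)
    {n : ℕ} (D : Fin n → X) (hmem : h ∈ rules Q k)
    (hcor : ∀ i, h (ψ (D i)) = t.label (D i)) : IsERM Q t ψ D h := by
  refine ⟨hmem, fun h' _ => ?_⟩
  rw [empRisk_zero t ψ h D hcor]
  exact empRisk_nonneg t ψ h' D

lemma correct_of_isERM (t : InvTask X r k) (ψ : X → Fin d → ℝ) (h : (Fin d → ℝ) → Fin k)
    {n : ℕ} (hn : 0 < n) (D : Fin n → X) (hERM : IsERM Q t ψ D h)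
    (h' : (Fin d → ℝ) → Fin k) (hmem' : h' ∈ rules Q k)
    (hcor' : ∀ i, h' (ψ (D i)) = t.label (D i)) :
    ∀ i, h (ψ (D i)) = t.label (D i) := by
  have h1 : empRisk t ψ h D ≤ 0 := by
    rw [← empRisk_zero t ψ h' D hcor']
    exact hERM.2 h' hmem'
  have h2 : empRisk t ψ h D = 0 := le_antisymm h1 (empRisk_nonneg t ψ h D)
  unfold empRisk at h2
  have hnR : (0:ℝ) < (n:ℝ) := by exact_mod_cast hn
  have h3 : ∑ i : Fin n, (if t.label (D i) = h (ψ (D i)) then (0:ℝ) else 1) = 0 := by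
    rcases div_eq_zero_iff.mp h2 with h | h
    · exact h
    · exact absurd h (ne_of_gt hnR)
  intro i
  have h4 := (Finset.sum_eq_zero_iff_of_nonneg
    (fun i _ => by split <;> norm_num)).mp h3 i (Finset.mem_univ i)
  by_contra hne
  rw [if_neg (fun hh => hne hh.symm)] at h4
  norm_num at h4

/-- The class-representative encoder associated with `φ` is population optimal. -/
lemma phi'_popt (φ : X → Fin d → ℝ) (hφ : PopOptimal r Q φ) (hQlin : ContainsLinear Q)
    (hn : 2 ≤ nequiv r) :
    PopOptimal r Q (fun x => φ (Quotient.mk r x).out) := by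
  intro k' hk2 hkm t'
  obtain ⟨h1, hh1, hcor⟩ := realize φ hφ hQlin hn hk2 hkm t'.label
    (fun x x' hxx' => t'.label_inv x x' hxx')
  have hcor' : ∀ x, h1 (φ (Quotient.mk r x).out) = t'.label x := by
    intro x
    rw [hcor]
    exact t'.label_inv _ x (Quotient.exact (Quotient.out_eq _))
  have hrisk : risk t' (fun x => φ (Quotient.mk r x).out) h1 = bayes t' := by
    rw [risk_eq]
    have : ∀ x : X, t'.p x (t'.label x) - t'.p x (h1 (φ (Quotient.mk r x).out)) = 0 := by
      intro x; rw [hcor' x]; ring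
    rw [Finset.sum_congr rfl fun x _ => this x]
    simp
  apply le_antisymm
  · exact csInf_le ⟨bayes t', by rintro _ ⟨h, _, rfl⟩; exact bayes_le_risk t' _ h⟩
      ⟨h1, hh1, hrisk⟩
  · exact le_csInf ⟨_, ⟨h1, hh1, hrisk⟩⟩ (by rintro _ ⟨h, _, rfl⟩; exact bayes_le_risk t' _ h)

lemma group_sum (μ : X → ℝ) (G : Quotient r → ℝ) :
    ∑ x : X, μ x * G (Quotient.mk r x)
      = ∑ cl : Quotient r, (∑ x : X, if Quotient.mk r x = cl then μ x else 0) * G cl := by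
  have h1 : ∀ cl : Quotient r, (∑ x : X, if Quotient.mk r x = cl then μ x else 0) * G cl
      = ∑ x : X, (if Quotient.mk r x = cl then μ x * G cl else 0) := by
    intro cl
    rw [Finset.sum_mul]
    exact Finset.sum_congr rfl fun x _ => by split <;> ring
  simp_rw [h1]
  rw [Finset.sum_comm]
  refine Finset.sum_congr rfl fun x _ => ?_
  rw [Finset.sum_ite_eq Finset.univ (Quotient.mk r x) (fun cl => μ x * G cl)]
  rw [if_pos (Finset.mem_univ _)]

lemma sum_prod_ind (μ : X → ℝ) (n : ℕ) (A : Quotient r) :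
    ∑ D : Fin n → X, (∏ i, μ (D i)) * (if ∀ i, Quotient.mk r (D i) ≠ A then (1:ℝ) else 0)
      = (∑ x : X, if Quotient.mk r x = A then 0 else μ x) ^ n := by
  rw [Fintype.sum_pow]
  refine Finset.sum_congr rfl fun D _ => ?_
  by_cases h : ∀ i, Quotient.mk r (D i) ≠ A
  · rw [if_pos h, mul_one]
    exact Finset.prod_congr rfl fun i _ => (if_neg (h i)).symm
  · rw [if_neg h, mul_zero]
    push_neg at h
    obtain ⟨i₀, hi₀⟩ := h
    symm
    exact Finset.prod_eq_zero (Finset.mem_univ i₀) (if_pos hi₀)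

lemma base_miss (μ : X → ℝ) (hμ1 : ∑ x : X, μ x = 1) (A : Quotient r) :
    (∑ x : X, if Quotient.mk r x = A then 0 else μ x)
      = 1 - (∑ x : X, if Quotient.mk r x = A then μ x else 0) := by
  have h1 : ∀ x : X, (if Quotient.mk r x = A then (0:ℝ) else μ x)
      = μ x - (if Quotient.mk r x = A then μ x else 0) := by
    intro x; split <;> ring
  simp_rw [h1, Finset.sum_sub_distrib, hμ1]

lemma exp_miss (μ : X → ℝ) (hμ1 : ∑ x : X, μ x = 1) (n : ℕ) :
    ∑ D : Fin n → X, (∏ i, μ (D i)) *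
        (∑ x : X, μ x * (if ∀ i, Quotient.mk r (D i) ≠ Quotient.mk r x then (1:ℝ) else 0))
      = ∑ cl : Quotient r, (∑ x : X, if Quotient.mk r x = cl then μ x else 0) *
          (1 - (∑ x : X, if Quotient.mk r x = cl then μ x else 0)) ^ n := by
  have h1 : ∀ D : Fin n → X, (∏ i, μ (D i)) *
        (∑ x : X, μ x * (if ∀ i, Quotient.mk r (D i) ≠ Quotient.mk r x then (1:ℝ) else 0))
      = ∑ x : X, μ x * ((∏ i, μ (D i)) *
          (if ∀ i, Quotient.mk r (D i) ≠ Quotient.mk r x then (1:ℝ) else 0)) := by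
    intro D
    rw [Finset.mul_sum]
    exact Finset.sum_congr rfl fun x _ => by ring
  simp_rw [h1]
  rw [Finset.sum_comm]
  have h2 : ∀ x : X, ∑ D : Fin n → X, μ x * ((∏ i, μ (D i)) *
        (if ∀ i, Quotient.mk r (D i) ≠ Quotient.mk r x then (1:ℝ) else 0))
      = μ x * (1 - (∑ x' : X, if Quotient.mk r x' = Quotient.mk r x then μ x' else 0)) ^ n := by
    intro x
    rw [← Finset.mul_sum, sum_prod_ind μ n (Quotient.mk r x),
      base_miss μ hμ1 (Quotient.mk r x)]
  simp_rw [h2]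
  exact group_sum μ (fun cl => (1 - ∑ x : X, if Quotient.mk r x = cl then μ x else 0) ^ n)

end Aux3
section Aux4

/-- Existence of a maximizer with positive coordinates for the missing-mass functional. -/
lemma simplex_max (C : Type*) [Fintype C] [Nonempty C] (n : ℕ) (hn : 1 ≤ n) :
    ∃ q ∈ stdSimplex ℝ C, (∀ q' ∈ stdSimplex ℝ C,
        (∑ cl, q' cl * (1 - q' cl) ^ n) ≤ ∑ cl, q cl * (1 - q cl) ^ n) ∧ ∀ cl, 0 < q cl := by
  classical
  set F : (C → ℝ) → ℝ := fun q => ∑ cl, q cl * (1 - q cl) ^ n with hF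
  have hFc : Continuous F := by
    apply continuous_finset_sum
    intro c _
    exact (continuous_apply c).mul ((continuous_const.sub (continuous_apply c)).pow n)
  have hne : (stdSimplex ℝ C).Nonempty := by
    refine ⟨fun _ => (Fintype.card C : ℝ)⁻¹, fun _ => by positivity, ?_⟩
    rw [Finset.sum_const, Finset.card_univ, nsmul_eq_mul]
    have : (0:ℝ) < (Fintype.card C : ℝ) := by exact_mod_cast Fintype.card_pos
    field_simp
  obtain ⟨q, hq, hqmax⟩ := (isCompact_stdSimplex ℝ C).exists_isMaxOn hne hFc.continuousOn
  refine ⟨q, hq, fun q' hq' => hqmax hq', fun cl₀ => ?_⟩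
  by_contra hpos
  have hq0 : q cl₀ = 0 := le_antisymm (not_lt.mp hpos) (hq.1 cl₀)
  have hstar : ∃ cl, 0 < q cl := by
    by_contra hall
    push_neg at hall
    have : ∑ cl, q cl = 0 :=
      le_antisymm (Finset.sum_nonpos fun cl _ => hall cl) (Finset.sum_nonneg fun cl _ => hq.1 cl)
    rw [hq.2] at this
    norm_num at this
  obtain ⟨cs, hcs⟩ := hstar
  have hne01 : cl₀ ≠ cs := fun h => absurd hq0 (by rw [h]; exact ne_of_gt hcs)
  have hcs1 : q cs ≤ 1 := by
    rw [← hq.2]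
    exact Finset.single_le_sum (fun cl _ => hq.1 cl) (Finset.mem_univ cs)
  set v : ℝ := q cs / 2 with hv
  have hvpos : 0 < v := by positivity
  set q' : C → ℝ := fun e => q e + (if e = cl₀ then v else 0) - (if e = cs then v else 0) with hq'
  have hq'mem : q' ∈ stdSimplex ℝ C := by
    constructor
    · intro e
      simp only [hq']
      rcases eq_or_ne e cl₀ with h0 | h0
      · rw [if_pos h0, if_neg (h0 ▸ hne01)]
        have := hq.1 e
        linarith
      · rw [if_neg h0]
        rcases eq_or_ne e cs with h1 | h1
        · rw [if_pos h1, h1, hv]; linarith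
        · rw [if_neg h1]; have := hq.1 e; linarith
    · simp only [hq']
      rw [Finset.sum_sub_distrib, Finset.sum_add_distrib,
        Finset.sum_ite_eq' Finset.univ cl₀ (fun _ => v),
        Finset.sum_ite_eq' Finset.univ cs (fun _ => v),
        if_pos (Finset.mem_univ _), if_pos (Finset.mem_univ _), hq.2]
      ring
  have hq'cl₀ : q' cl₀ = v := by simp [hq', hq0, hne01]
  have hq'cs : q' cs = v := by
    have h9 : q' cs = q cs - v := by simp [hq', Ne.symm hne01]
    rw [h9, hv]; ring
  have hq'other : ∀ e, e ≠ cl₀ → e ≠ cs → q' e = q e := by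
    intro e h0 h1
    simp only [hq']
    rw [if_neg h0, if_neg h1]; ring
  have hdiff : F q' - F q = q cs * (1 - v) ^ n - q cs * (1 - q cs) ^ n := by
    have hptwise : ∀ e, q' e * (1 - q' e) ^ n - q e * (1 - q e) ^ n
        = (if e = cl₀ then v * (1 - v) ^ n - 0 else 0)
          + (if e = cs then v * (1 - v) ^ n - q cs * (1 - q cs) ^ n else 0) := by
      intro e
      rcases eq_or_ne e cl₀ with h0 | h0
      · rw [if_pos h0, if_neg (h0 ▸ hne01), h0, hq'cl₀, hq0]; ring
      · rw [if_neg h0]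
        rcases eq_or_ne e cs with h1 | h1
        · rw [if_pos h1, h1, hq'cs]; ring
        · rw [if_neg h1, hq'other e h0 h1]; ring
    have : F q' - F q = ∑ e, (q' e * (1 - q' e) ^ n - q e * (1 - q e) ^ n) := by
      rw [hF]; rw [Finset.sum_sub_distrib]
    rw [this]
    simp_rw [hptwise]
    rw [Finset.sum_add_distrib,
      Finset.sum_ite_eq' Finset.univ cl₀ (fun _ => v * (1 - v) ^ n - 0),
      Finset.sum_ite_eq' Finset.univ cs (fun _ => v * (1 - v) ^ n - q cs * (1 - q cs) ^ n),
      if_pos (Finset.mem_univ _), if_pos (Finset.mem_univ _), hv]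
    ring
  have hlt : (1 - q cs) ^ n < (1 - v) ^ n := by
    apply pow_lt_pow_left₀ _ (by linarith) (by omega)
    rw [hv]; linarith
  have hFlt : F q < F q' := by
    have h1 : 0 < q cs * (1 - v) ^ n - q cs * (1 - q cs) ^ n := by
      have := mul_lt_mul_of_pos_left hlt hcs
      linarith
    linarith [hdiff]
  exact absurd (hqmax hq'mem) (not_le.mpr hFlt)

end Aux4
section Aux5

variable {X : Type*} [Fintype X] {r : Setoid X} {d k : ℕ} {Q : ProbingFamily d}

lemma excessRisk_le_one (t : InvTask X r k) (ψ : X → Fin d → ℝ) {n : ℕ} (D : Fin n → X) :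
    excessRisk Q t ψ D ≤ 1 := by
  unfold excessRisk
  have h1 : sSup ((fun h => risk t ψ h) '' {h | IsERM Q t ψ D h}) ≤ 1 := by
    apply Real.sSup_le _ zero_le_one
    rintro _ ⟨h, _, rfl⟩
    exact risk_le_one t ψ h
  have h2 := bayes_nonneg t
  linarith

lemma expExcess_le_one (t : InvTask X r k) (ψ : X → Fin d → ℝ) (n : ℕ) :
    expExcess Q t ψ n ≤ 1 := by
  unfold expExcess
  calc ∑ D : Fin n → X, (∏ i, marginal t (D i)) * excessRisk Q t ψ D
      ≤ ∑ D : Fin n → X, (∏ i, marginal t (D i)) * 1 := by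
        refine Finset.sum_le_sum fun D _ => ?_
        exact mul_le_mul_of_nonneg_left (excessRisk_le_one t ψ D)
          (Finset.prod_nonneg fun i _ => marginal_nonneg t (D i))
    _ = (∑ x : X, marginal t x) ^ n := by
        simp_rw [mul_one]
        rw [Fintype.sum_pow]
    _ = 1 := by rw [sum_marginal t, one_pow]

lemma excessRisk_ge (t : InvTask X r k) (ψ : X → Fin d → ℝ) {n : ℕ} (D : Fin n → X)
    (h : (Fin d → ℝ) → Fin k) (hERM : IsERM Q t ψ D h) :
    risk t ψ h - bayes t ≤ excessRisk Q t ψ D := by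
  unfold excessRisk
  have h1 : risk t ψ h ≤ sSup ((fun h => risk t ψ h) '' {h | IsERM Q t ψ D h}) := by
    have hbdd : BddAbove ((fun h => risk t ψ h) '' {h | IsERM Q t ψ D h}) := by
      refine ⟨1, ?_⟩
      rintro _ ⟨h', _, rfl⟩
      exact risk_le_one t ψ h'
    exact le_csSup hbdd ⟨h, hERM, rfl⟩
  linarith

end Aux5
section Main

variable {X : Type*} [Fintype X] {r : Setoid X} {d : ℕ} {Q : ProbingFamily d}

lemma no_bad (hn : 2 ≤ nequiv r) (hQlin : ContainsLinear Q)
    (φ : X → Fin d → ℝ) (hφ : SampleOptimal r Q φ)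
    {k : ℕ} (hk2 : 2 ≤ k) (hkm : k ≤ nequiv r)
    (c : X → Fin k) (hc : IsInvariant r c)
    (hbad : (Fin d → ℝ) → Fin k) (hbmem : hbad ∈ rules Q k)
    (hcov : ∀ cl : Quotient r, ∃ x : X, Quotient.mk r x = cl ∧ hbad (φ x) = c x)
    (x₀ : X) (hx₀ : hbad (φ x₀) ≠ c x₀) : False := by
  classical
  set n := nequiv r with hndef
  have hn1 : 1 ≤ n := by omega
  have hCne : Nonempty (Quotient r) := by
    have h1 : 0 < nequiv r := by omega
    simp only [nequiv] at h1
    exact (Nat.card_pos_iff.mp h1).1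
  have hcardC : Fintype.card (Quotient r) = n := by
    rw [hndef, nequiv, Nat.card_eq_fintype_card]
  -- maximizer of the missing-mass functional
  obtain ⟨q, hqmem, hqmax, hqpos⟩ := simplex_max (Quotient r) n hn1
  -- class representatives inside the correct set of `hbad`
  set g : Quotient r → X := fun cl => (hcov cl).choose with hgdef
  have hg1 : ∀ cl, Quotient.mk r (g cl) = cl := fun cl => (hcov cl).choose_spec.1
  have hg2 : ∀ cl, hbad (φ (g cl)) = c (g cl) := fun cl => (hcov cl).choose_spec.2
  -- the input marginal
  set Ncard : Quotient r → ℝ :=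
    fun cl => ((Finset.univ.filter fun x : X => Quotient.mk r x = cl).card : ℝ) with hNdef
  have hNnonneg : ∀ cl, 0 ≤ Ncard cl := fun cl => Nat.cast_nonneg _
  set mass : X → ℝ := fun x => q (Quotient.mk r x) / (Ncard (Quotient.mk r x) + 1) *
    ((if x = g (Quotient.mk r x) then 1 else 0) + 1) with hmassdef
  have hmasspos : ∀ x, 0 < mass x := by
    intro x
    apply mul_pos
    · exact div_pos (hqpos _) (by linarith [hNnonneg (Quotient.mk r x)])
    · split <;> norm_num
  have hCS : ∀ cl, ∑ x : X, (if Quotient.mk r x = cl then mass x else 0) = q cl := by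
    intro cl
    rw [← Finset.sum_filter]
    have hgmem : g cl ∈ Finset.univ.filter fun x : X => Quotient.mk r x = cl :=
      Finset.mem_filter.mpr ⟨Finset.mem_univ _, hg1 cl⟩
    have hcongr : ∀ x ∈ Finset.univ.filter fun x : X => Quotient.mk r x = cl,
        mass x = q cl / (Ncard cl + 1) * ((if x = g cl then 1 else 0) + 1) := by
      intro x hx
      have hxcl : Quotient.mk r x = cl := (Finset.mem_filter.mp hx).2
      rw [hmassdef]
      simp only [hxcl]
    rw [Finset.sum_congr rfl hcongr, ← Finset.mul_sum]
    have hsum : ∑ x ∈ Finset.univ.filter (fun x : X => Quotient.mk r x = cl),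
        ((if x = g cl then (1:ℝ) else 0) + 1) = Ncard cl + 1 := by
      rw [Finset.sum_add_distrib, Finset.sum_ite_eq' _ (g cl) (fun _ => (1:ℝ)),
        if_pos hgmem, Finset.sum_const, nsmul_eq_mul, mul_one, hNdef]
      ring
    rw [hsum, div_mul_cancel₀]
    have := hNnonneg cl
    linarith
  have hmass1 : ∑ x : X, mass x = 1 := by
    have h1 := group_sum (r := r) mass (fun _ => 1)
    simp_rw [mul_one] at h1
    rw [h1, Finset.sum_congr rfl fun cl _ => hCS cl, hqmem.2]
  have hGRP : ∀ G : Quotient r → ℝ, ∑ x : X, mass x * G (Quotient.mk r x)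
      = ∑ cl, q cl * G cl := by
    intro G
    rw [group_sum mass G]
    exact Finset.sum_congr rfl fun cl _ => by rw [hCS cl]
  set Fhat : ℝ := ∑ cl, q cl * (1 - q cl) ^ n with hFhatdef
  have hq_le_one : ∀ cl, q cl ≤ 1 := by
    intro cl
    rw [← hqmem.2]
    exact Finset.single_le_sum (fun cl' _ => hqmem.1 cl') (Finset.mem_univ cl)
  have hFhat0 : 0 ≤ Fhat := Finset.sum_nonneg fun cl _ =>
    mul_nonneg (hqmem.1 cl) (pow_nonneg (by linarith [hq_le_one cl]) n)
  -- the distinguished dataset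
  set e : Quotient r ≃ Fin n := Fintype.equivFinOfCardEq hcardC with hedef
  set Dstar : Fin n → X := fun i => g (e.symm i) with hDstardef
  set Pstar : ℝ := ∏ i, mass (Dstar i) with hPstardef
  have hPstar : 0 < Pstar := Finset.prod_pos fun i _ => hmasspos _
  set cval : ℝ := mass x₀ * Pstar with hcvaldef
  have hcval : 0 < cval := mul_pos (hmasspos x₀) hPstar
  have hFc : 0 < Fhat + cval := by linarith
  set ε₀ : ℝ := cval / (Fhat + cval) with hε₀def
  have hε₀pos : 0 < ε₀ := div_pos hcval hFc
  have hε₀mul : ε₀ * (Fhat + cval) = cval := div_mul_cancel₀ _ (ne_of_gt hFc)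
  set η : ℝ := min 4⁻¹ (ε₀ / 4) with hηdef
  have hηpos : 0 < η := lt_min (by norm_num) (by positivity)
  have hη14 : η ≤ 4⁻¹ := min_le_left _ _
  have hηε : η ≤ ε₀ / 4 := min_le_right _ _
  have hkR : (2:ℝ) ≤ (k:ℝ) := by exact_mod_cast hk2
  set b : ℝ := η / ((k:ℝ) - 1) with hbdef
  have hbnonneg : 0 ≤ b := div_nonneg hηpos.le (by linarith)
  have hbη : b ≤ η := by
    rw [hbdef]
    exact div_le_self hηpos.le (by linarith)
  have hblt : b < 1 - η := by
    have : η < 1 - η := by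
      have : (4:ℝ)⁻¹ < 1 - 4⁻¹ := by norm_num
      linarith
    linarith
  set ρ : ℝ := 1 - η - b with hρdef
  have hρlb : 1 - 2 * η ≤ ρ := by rw [hρdef]; linarith
  have hρpos : 0 < ρ := by
    have : 2 * η ≤ 2 * 4⁻¹ := by linarith
    linarith
  -- the hard task
  have hkne : (k:ℝ) - 1 ≠ 0 := by linarith
  have hinner : ∀ x : X, ∑ y : Fin k, (if y = c x then 1 - η else b) = 1 := by
    intro x
    have hh : ((k:ℝ) - 1) * (η / ((k:ℝ) - 1)) = η := by field_simp
    rw [aux_sum_ite hk2, hbdef, hh]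
    ring
  set T : InvTask X r k :=
    { p := fun x y => mass x * (if y = c x then 1 - η else b)
      nonneg := fun x y => by
        apply mul_nonneg (hmasspos x).le
        split
        · linarith
        · exact hbnonneg
      sum_one := by
        have h1 : ∀ x : X, ∑ y : Fin k, mass x * (if y = c x then 1 - η else b)
            = mass x := by
          intro x
          rw [← Finset.mul_sum, hinner x, mul_one]
        rw [Finset.sum_congr rfl fun x _ => h1 x, hmass1]
      label := c
      label_argmax := fun x y hy => by
        rw [if_neg hy, if_pos rfl]
        exact mul_lt_mul_of_pos_left hblt (hmasspos x)
      label_inv := fun x x' hxx' => hc x x' hxx' } with hTdef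
  have hTp : ∀ x y, T.p x y = mass x * (if y = c x then 1 - η else b) := fun _ _ => rfl
  have hTlab : ∀ x, T.label x = c x := fun _ => rfl
  have hmarg : ∀ x, marginal T x = mass x := by
    intro x
    unfold marginal
    calc ∑ y : Fin k, T.p x y = ∑ y : Fin k, mass x * (if y = c x then 1 - η else b) :=
          Finset.sum_congr rfl fun y _ => hTp x y
      _ = mass x * ∑ y : Fin k, (if y = c x then 1 - η else b) := by rw [Finset.mul_sum]
      _ = mass x := by rw [hinner x, mul_one]
  -- risk identity for the hard task
  have hgap : ∀ (h' : (Fin d → ℝ) → Fin k) (x : X),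
      T.p x (T.label x) - T.p x (h' (φ x))
        = ρ * (mass x * (if h' (φ x) = c x then 0 else 1)) := by
    intro h' x
    rw [hTp, hTp, hTlab, if_pos rfl]
    rcases eq_or_ne (h' (φ x)) (c x) with heq | hne
    · rw [if_pos heq, if_pos heq]; ring
    · rw [if_neg hne, if_neg hne, hρdef]; ring
  have hriskT : ∀ h' : (Fin d → ℝ) → Fin k,
      risk T φ h' = bayes T + ρ * ∑ x : X, mass x * (if h' (φ x) = c x then 0 else 1) := by
    intro h'
    rw [risk_eq, Finset.sum_congr rfl fun x _ => hgap h' x, ← Finset.mul_sum]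
  -- flip label
  have hk0 : 0 < k := by omega
  have hk1 : 1 < k := by omega
  set flip : Fin k → Fin k := fun y => if y = ⟨0, hk0⟩ then ⟨1, hk1⟩ else ⟨0, hk0⟩ with hflipdef
  have hflipne : ∀ y, flip y ≠ y := by
    intro y
    rw [hflipdef]
    dsimp only
    split
    · rename_i h
      rw [h]
      simp [Fin.ext_iff]
    · rename_i h
      exact fun h' => h h'.symm
  -- lower bound on the excess risk for each dataset
  have hexcess_lb : ∀ D' : Fin n → X,
      ρ * (∑ x : X, mass x * (if ∀ i, Quotient.mk r (D' i) ≠ Quotient.mk r x then (1:ℝ) else 0))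
        ≤ excessRisk Q T φ D' := by
    intro D'
    set cD : X → Fin k := fun x =>
      if ∀ i, Quotient.mk r (D' i) ≠ Quotient.mk r x then flip (c x) else c x with hcDdef
    have hcDinv : IsInvariant r cD := by
      intro x x' hxx'
      have h1 : Quotient.mk r x = Quotient.mk r x' := Quotient.sound hxx'
      have h2 : c x = c x' := hc x x' hxx'
      rw [hcDdef]
      dsimp only
      rw [h1, h2]
    obtain ⟨hD, hDmem, hDcor⟩ := realize φ hφ.1 hQlin hn hk2 hkm cD hcDinv
    have hcDat : ∀ i, cD (D' i) = c (D' i) := by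
      intro i
      rw [hcDdef]
      dsimp only
      rw [if_neg]
      push_neg
      exact ⟨i, rfl⟩
    have hDcorD : ∀ i, hD (φ (D' i)) = T.label (D' i) := by
      intro i
      rw [hDcor, hcDat i, hTlab]
    have hERM : IsERM Q T φ D' hD := isERM_of_correct T φ hD D' hDmem hDcorD
    have hind : ∀ x : X, (if hD (φ x) = c x then (0:ℝ) else 1)
        = (if ∀ i, Quotient.mk r (D' i) ≠ Quotient.mk r x then (1:ℝ) else 0) := by
      intro x
      rw [hDcor, hcDdef]
      dsimp only
      by_cases hmiss : ∀ i, Quotient.mk r (D' i) ≠ Quotient.mk r x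
      · simp only [if_pos hmiss, if_neg (hflipne (c x))]
      · simp [if_neg hmiss]
    have := excessRisk_ge T φ D' hD hERM
    rw [hriskT hD] at this
    simp_rw [hind] at this
    linarith
  -- lower bound at the distinguished dataset
  have hDstar_cor : ∀ i, hbad (φ (Dstar i)) = T.label (Dstar i) := by
    intro i
    exact (hg2 (e.symm i)).trans (hTlab (g (e.symm i))).symm
  have hERMstar : IsERM Q T φ Dstar hbad := isERM_of_correct T φ hbad Dstar hbmem hDstar_cor
  have hexcess_star : ρ * mass x₀ ≤ excessRisk Q T φ Dstar := by
    have h1 := excessRisk_ge T φ Dstar hbad hERMstar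
    rw [hriskT hbad] at h1
    have h2 : mass x₀ ≤ ∑ x : X, mass x * (if hbad (φ x) = c x then 0 else 1) := by
      have h3 : mass x₀ * (if hbad (φ x₀) = c x₀ then (0:ℝ) else 1) = mass x₀ := by
        rw [if_neg hx₀, mul_one]
      rw [← h3]
      apply Finset.single_le_sum _ (Finset.mem_univ x₀)
      intro x _
      apply mul_nonneg (hmasspos x).le
      split <;> norm_num
    nlinarith [hρpos]
  have hmissstar : ∀ x : X,
      (if ∀ i, Quotient.mk r (Dstar i) ≠ Quotient.mk r x then (1:ℝ) else 0) = 0 := by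
    intro x
    rw [if_neg]
    push_neg
    refine ⟨e (Quotient.mk r x), ?_⟩
    rw [hDstardef]
    dsimp only
    rw [Equiv.symm_apply_apply, hg1]
  -- lower bound on the expected excess
  have hA : ρ * (Fhat + cval) ≤ expExcess Q T φ n := by
    unfold expExcess
    have hstep : ∀ D' : Fin n → X,
        (∏ i, mass (D' i)) *
          (ρ * (∑ x : X, mass x * (if ∀ i, Quotient.mk r (D' i) ≠ Quotient.mk r x then (1:ℝ) else 0))
            + (if D' = Dstar then ρ * mass x₀ else 0))
          ≤ (∏ i, marginal T (D' i)) * excessRisk Q T φ D' := by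
      intro D'
      have hprod : (∏ i, marginal T (D' i)) = ∏ i, mass (D' i) :=
        Finset.prod_congr rfl fun i _ => hmarg (D' i)
      rw [hprod]
      apply mul_le_mul_of_nonneg_left _ (Finset.prod_nonneg fun i _ => (hmasspos _).le)
      rcases eq_or_ne D' Dstar with hDeq | hDne
      · rw [if_pos hDeq, hDeq]
        have h1 : (∑ x : X, mass x *
            (if ∀ i, Quotient.mk r (Dstar i) ≠ Quotient.mk r x then (1:ℝ) else 0)) = 0 := by
          apply Finset.sum_eq_zero
          intro x _
          rw [hmissstar x, mul_zero]
        rw [h1, mul_zero, zero_add]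
        exact hexcess_star
      · rw [if_neg hDne, add_zero]
        exact hexcess_lb D'
    calc ρ * (Fhat + cval)
        = ∑ D' : Fin n → X, (∏ i, mass (D' i)) *
            (ρ * (∑ x : X, mass x * (if ∀ i, Quotient.mk r (D' i) ≠ Quotient.mk r x then (1:ℝ) else 0))
              + (if D' = Dstar then ρ * mass x₀ else 0)) := by
          have hsplit : ∀ D' : Fin n → X, (∏ i, mass (D' i)) *
              (ρ * (∑ x : X, mass x * (if ∀ i, Quotient.mk r (D' i) ≠ Quotient.mk r x then (1:ℝ) else 0))
                + (if D' = Dstar then ρ * mass x₀ else 0))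
              = ρ * ((∏ i, mass (D' i)) *
                  (∑ x : X, mass x * (if ∀ i, Quotient.mk r (D' i) ≠ Quotient.mk r x then (1:ℝ) else 0)))
                + (if D' = Dstar then (∏ i, mass (D' i)) * (ρ * mass x₀) else 0) := by
            intro D'
            split <;> ring
          rw [Finset.sum_congr rfl fun D' _ => hsplit D', Finset.sum_add_distrib, ← Finset.mul_sum]
          rw [exp_miss mass hmass1 n]
          rw [Finset.sum_congr rfl fun cl (_ : cl ∈ Finset.univ) => by rw [hCS cl]]
          rw [Finset.sum_ite_eq' Finset.univ Dstar (fun D' => (∏ i, mass (D' i)) * (ρ * mass x₀)),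
            if_pos (Finset.mem_univ _), ← hPstardef, ← hFhatdef]
          rw [hcvaldef]
          ring
      _ ≤ ∑ D' : Fin n → X, (∏ i, marginal T (D' i)) * excessRisk Q T φ D' :=
          Finset.sum_le_sum fun D' _ => hstep D'
  -- the invariant encoder
  set φ' : X → Fin d → ℝ := fun x => φ (Quotient.mk r x).out with hφ'def
  have hφ'pop : PopOptimal r Q φ' := phi'_popt φ hφ.1 hQlin hn
  -- upper bound on the worst-case expected excess of φ'
  have hB : worstExcess r Q φ' n ≤ Fhat := by
    apply Real.sSup_le _ hFhat0
    rintro el ⟨k', hk2', hkm', t', rfl⟩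
    -- realizer for t'.label through φ'
    obtain ⟨h1, h1mem, h1cor⟩ := realize φ' hφ'pop hQlin hn hk2' hkm' t'.label
      (fun x x' hxx' => t'.label_inv x x' hxx')
    have hexc_ub : ∀ D' : Fin n → X, excessRisk Q t' φ' D'
        ≤ ∑ x : X, marginal t' x *
            (if ∀ i, Quotient.mk r (D' i) ≠ Quotient.mk r x then (1:ℝ) else 0) := by
      intro D'
      have h1corD : ∀ i, h1 (φ' (D' i)) = t'.label (D' i) := fun i => h1cor (D' i)
      have h1ERM : IsERM Q t' φ' D' h1 := isERM_of_correct t' φ' h1 D' h1mem h1corD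
      unfold excessRisk
      have hsup : sSup ((fun h => risk t' φ' h) '' {h | IsERM Q t' φ' D' h})
          ≤ bayes t' + ∑ x : X, marginal t' x *
              (if ∀ i, Quotient.mk r (D' i) ≠ Quotient.mk r x then (1:ℝ) else 0) := by
        have hnempty : ((fun h => risk t' φ' h) '' {h | IsERM Q t' φ' D' h}).Nonempty :=
          ⟨_, ⟨h1, h1ERM, rfl⟩⟩
        apply csSup_le hnempty
        rintro _ ⟨h, hERM, rfl⟩
        show risk t' φ' h ≤ _
        have hcorD : ∀ i, h (φ' (D' i)) = t'.label (D' i) :=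
          correct_of_isERM t' φ' h (by omega) D' hERM h1 h1mem h1corD
        rw [risk_eq]
        have hgap' : ∀ x : X, t'.p x (t'.label x) - t'.p x (h (φ' x))
            ≤ marginal t' x *
              (if ∀ i, Quotient.mk r (D' i) ≠ Quotient.mk r x then (1:ℝ) else 0) := by
          intro x
          by_cases hmiss : ∀ i, Quotient.mk r (D' i) ≠ Quotient.mk r x
          · rw [if_pos hmiss, mul_one]
            have := t'.nonneg x (h (φ' x))
            have := label_le_marginal t' x
            linarith
          · rw [if_neg hmiss, mul_zero]
            push_neg at hmiss
            obtain ⟨i, hi⟩ := hmiss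
            have hsame : φ' x = φ' (D' i) := by
              rw [hφ'def]
              dsimp only
              rw [hi]
            have hlab : t'.label (D' i) = t'.label x :=
              t'.label_inv (D' i) x (Quotient.exact hi)
            rw [hsame, hcorD i, hlab]
            simp
        have hsum := Finset.sum_le_sum fun x (_ : x ∈ Finset.univ) => hgap' x
        linarith
      linarith [hsup]
    -- conclude the per-task bound
    set Qc : Quotient r → ℝ :=
      fun cl => ∑ x : X, (if Quotient.mk r x = cl then marginal t' x else 0) with hQcdef
    have hQcmem : Qc ∈ stdSimplex ℝ (Quotient r) := by
      constructor
      · intro cl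
        apply Finset.sum_nonneg
        intro x _
        split
        · exact marginal_nonneg t' x
        · exact le_refl _
      · have h1 := group_sum (r := r) (marginal t') (fun _ => 1)
        simp_rw [mul_one] at h1
        rw [← h1, sum_marginal t']
    unfold expExcess
    calc ∑ D' : Fin n → X, (∏ i, marginal t' (D' i)) * excessRisk Q t' φ' D'
        ≤ ∑ D' : Fin n → X, (∏ i, marginal t' (D' i)) *
            (∑ x : X, marginal t' x *
              (if ∀ i, Quotient.mk r (D' i) ≠ Quotient.mk r x then (1:ℝ) else 0)) :=
          Finset.sum_le_sum fun D' _ => mul_le_mul_of_nonneg_left (hexc_ub D')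
            (Finset.prod_nonneg fun i _ => marginal_nonneg t' (D' i))
      _ = ∑ cl : Quotient r, Qc cl * (1 - Qc cl) ^ n :=
          exp_miss (marginal t') (sum_marginal t') n
      _ ≤ Fhat := hqmax Qc hQcmem
  -- assemble the contradiction
  have hAmem : expExcess Q T φ n ∈ {e : ℝ | ∃ k' : ℕ, 2 ≤ k' ∧ k' ≤ nequiv r ∧
      ∃ t : InvTask X r k', e = expExcess Q t φ n} := ⟨k, hk2, hkm, T, rfl⟩
  have hAub : ∀ el ∈ {e : ℝ | ∃ k' : ℕ, 2 ≤ k' ∧ k' ≤ nequiv r ∧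
      ∃ t : InvTask X r k', e = expExcess Q t φ n}, el ≤ 1 := by
    rintro el ⟨k', _, _, t'', rfl⟩
    exact expExcess_le_one t'' φ n
  have hAle : expExcess Q T φ n ≤ worstExcess r Q φ n := le_csSup ⟨1, hAub⟩ hAmem
  have hchain : worstExcess r Q φ n ≤ worstExcess r Q φ' n := hφ.2 n (by omega) φ' hφ'pop
  have hstrict : Fhat < ρ * (Fhat + cval) := by
    have h1 : 1 - ε₀ / 2 ≤ ρ := by linarith
    clear_value Fhat cval ρ ε₀
    have h2 : (1 - ε₀ / 2) * (Fhat + cval) ≤ ρ * (Fhat + cval) :=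
      mul_le_mul_of_nonneg_right h1 hFc.le
    have h3 : (1 - ε₀ / 2) * (Fhat + cval) = (Fhat + cval) - ε₀ * (Fhat + cval) / 2 := by ring
    rw [hε₀mul] at h3
    linarith
  linarith

end Main

/-- **Corollary** (one example per equivalence class suffices for sample-optimal encoders):
if the dataset covers every equivalence class then the excess risk of ERMs vanishes,
equivalently every ERM attains the Bayes risk. -/
theorem excessRisk_eq_zero_of_cover {X : Type*} [Fintype X] (r : Setoid X)
    (hn : 2 ≤ nequiv r) {d : ℕ} (Q : ProbingFamily d)
    (hQlin : ContainsLinear Q) (hQclosed : ClosedUnderVectorManipulation Q)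
    (φ : X → Fin d → ℝ) (hφ : SampleOptimal r Q φ) :
    ∀ k : ℕ, 2 ≤ k → k ≤ nequiv r → ∀ t : InvTask X r k,
      ∀ n : ℕ, 1 ≤ n → ∀ D : Fin n → X,
        (∀ c : Quotient r, ∃ i, Quotient.mk r (D i) = c) →
        (excessRisk Q t φ D = 0 ∧
          sSup ((fun h => risk t φ h) '' {h | IsERM Q t φ D h}) = bayes t) := by
  intro k hk2 hkm t n hn1 D hcov
  obtain ⟨hg, hgmem, hgcor⟩ := realize φ hφ.1 hQlin hn hk2 hkm t.label
    (fun x x' h => t.label_inv x x' h)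
  -- every ERM is globally correct
  have hkey : ∀ h, IsERM Q t φ D h → ∀ x, h (φ x) = t.label x := by
    intro h hERM
    by_contra hbadx
    push_neg at hbadx
    obtain ⟨x₀, hx₀⟩ := hbadx
    have hcorD : ∀ i, h (φ (D i)) = t.label (D i) :=
      correct_of_isERM t φ h (by omega) D hERM hg hgmem (fun i => hgcor (D i))
    exact no_bad hn hQlin φ hφ hk2 hkm t.label (fun x x' hxx' => t.label_inv x x' hxx')
      h hERM.1
      (fun cl => by
        obtain ⟨i, hi⟩ := hcov cl
        exact ⟨D i, hi, hcorD i⟩)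
      x₀ hx₀
  have himg : ((fun h => risk t φ h) '' {h | IsERM Q t φ D h}) = {bayes t} := by
    apply Set.eq_singleton_iff_unique_mem.mpr
    constructor
    · refine ⟨hg, isERM_of_correct t φ hg D hgmem (fun i => hgcor (D i)), ?_⟩
      show risk t φ hg = bayes t
      rw [risk_eq, Finset.sum_congr rfl fun x _ =>
        (by rw [hgcor x]; ring : t.p x (t.label x) - t.p x (hg (φ x)) = 0)]
      simp
    · rintro _ ⟨h, hERM, rfl⟩
      show risk t φ h = bayes t
      rw [risk_eq, Finset.sum_congr rfl fun x _ =>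
        (by rw [hkey h hERM x]; ring : t.p x (t.label x) - t.p x (h (φ x)) = 0)]
      simp
  constructor
  · unfold excessRisk
    rw [himg, csSup_singleton]
    ring
  · rw [himg, csSup_singleton]

end ISSL
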